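/- arXiv:2411.04729 — 4 statements merged into one kernel-verified Lean document; each statement's English description precedes it below -/
import Mathlib

section
/- Let G be a simple graph on {1,…,p}. Define n_{L,m} = 1 + |{j : m < j ≤ p and (m,j) is a fill-in pair of G}| and n_L = ∑_{m=1}^p n_{L,m}. Then the number of triples (ℓ,m,j) with 1 ≤ ℓ < m < j ≤ p such that both (ℓ,m) and (ℓ,j) are fill-in pairs of G is at most n_L^{3/2}. (This triple count is the dominating operation count of the sparse Cholesky recursion, so the cost of computing the Cholesky factor is O(n_L^{1.5}).) -/
open scoped Classical

/-- For a simple graph `G` on `Fin p` with its natural linear order, the pair `(m, j)`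
with `m < j` is a *fill-in pair* if there is a walk in `G` from `m` to `j` all of whose
intermediate vertices are strictly smaller than `m`. -/
def FillIn {p : ℕ} (G : SimpleGraph (Fin p)) (m j : Fin p) : Prop :=
  m < j ∧ ∃ w : G.Walk m j, ∀ v ∈ w.support, v = m ∨ v = j ∨ v < m

/-- `n_{L,m} = 1 + #{j > m : (m,j) is a fill-in pair}`, the number of potential
non-zeros in column `m` of the Cholesky factor. -/
noncomputable def nLcol {p : ℕ} (G : SimpleGraph (Fin p)) (m : Fin p) : ℕ :=
  1 + (Finset.univ.filter (fun j : Fin p => FillIn G m j)).card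

/-- `n_L = ∑_m n_{L,m}`, the total number of potential non-zeros of the Cholesky factor. -/
noncomputable def nL {p : ℕ} (G : SimpleGraph (Fin p)) : ℕ :=
  ∑ m : Fin p, nLcol G m

lemma fillIn_trans {p : ℕ} {G : SimpleGraph (Fin p)} {l m j : Fin p}
    (h1 : FillIn G l m) (h2 : FillIn G l j) (hmj : m < j) : FillIn G m j := by
  obtain ⟨hlm, w1, hw1⟩ := h1
  obtain ⟨hlj, w2, hw2⟩ := h2
  refine ⟨hmj, w1.reverse.append w2, ?_⟩
  intro v hv
  rw [SimpleGraph.Walk.mem_support_append_iff] at hv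
  rcases hv with hv | hv
  · rw [SimpleGraph.Walk.support_reverse, List.mem_reverse] at hv
    rcases hw1 v hv with h | h | h
    · exact Or.inr (Or.inr (h ▸ hlm))
    · exact Or.inl h
    · exact Or.inr (Or.inr (h.trans hlm))
  · rcases hw2 v hv with h | h | h
    · exact Or.inr (Or.inr (h ▸ hlm))
    · exact Or.inr (Or.inl h)
    · exact Or.inr (Or.inr (h.trans hlm))

noncomputable def Scol {p : ℕ} (G : SimpleGraph (Fin p)) (l : Fin p) : Finset (Fin p) :=
  Finset.univ.filter (fun j : Fin p => FillIn G l j)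

noncomputable def Pset {p : ℕ} (G : SimpleGraph (Fin p)) (l : Fin p) :
    Finset (Fin p × Fin p) :=
  Finset.univ.filter
    (fun q : Fin p × Fin p => l < q.1 ∧ q.1 < q.2 ∧ FillIn G l q.1 ∧ FillIn G l q.2)

noncomputable def Fpairs {p : ℕ} (G : SimpleGraph (Fin p)) : Finset (Fin p × Fin p) :=
  Finset.univ.filter (fun q : Fin p × Fin p => FillIn G q.1 q.2)

-- card Fpairs = ∑ l, card (Scol l)
lemma card_Fpairs {p : ℕ} (G : SimpleGraph (Fin p)) :
    (Fpairs G).card = ∑ l : Fin p, (Scol G l).card := by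
  rw [Fpairs, Finset.card_filter, Fintype.sum_prod_type]
  refine Finset.sum_congr rfl fun l _ => ?_
  rw [Scol, Finset.card_filter]

-- triple count = ∑ l, card Pset
lemma triple_eq {p : ℕ} (G : SimpleGraph (Fin p)) :
    (Finset.univ.filter (fun t : Fin p × Fin p × Fin p =>
        t.1 < t.2.1 ∧ t.2.1 < t.2.2 ∧ FillIn G t.1 t.2.1 ∧ FillIn G t.1 t.2.2)).card
      = ∑ l : Fin p, (Pset G l).card := by
  rw [Finset.card_filter, Fintype.sum_prod_type]
  refine Finset.sum_congr rfl fun l _ => ?_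
  rw [Pset, Finset.card_filter]

-- 2 * card (Pset l) ≤ c l * (c l - 1)
lemma two_card_Pset_le {p : ℕ} (G : SimpleGraph (Fin p)) (l : Fin p) :
    2 * (Pset G l).card ≤ (Scol G l).card * ((Scol G l).card - 1) := by
  have hswap : ((Pset G l).image Prod.swap).card = (Pset G l).card :=
    Finset.card_image_of_injective _ Prod.swap_injective
  have hdisj : Disjoint (Pset G l) ((Pset G l).image Prod.swap) := by
    rw [Finset.disjoint_left]
    rintro ⟨a, b⟩ hab hsw
    simp only [Pset, Finset.mem_filter, Finset.mem_univ, true_and] at hab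
    simp only [Finset.mem_image] at hsw
    obtain ⟨⟨x, y⟩, hxy, hxyeq⟩ := hsw
    simp only [Pset, Finset.mem_filter, Finset.mem_univ, true_and] at hxy
    obtain ⟨rfl, rfl⟩ : y = a ∧ x = b := by
      simpa [Prod.ext_iff, Prod.swap] using hxyeq
    exact absurd (hab.2.1.trans hxy.2.1) (lt_irrefl _)
  have hsub : Pset G l ∪ (Pset G l).image Prod.swap ⊆ (Scol G l).offDiag := by
    intro q hq
    rw [Finset.mem_union] at hq
    rw [Finset.mem_offDiag]
    rcases hq with hq | hq
    · simp only [Pset, Finset.mem_filter, Finset.mem_univ, true_and] at hq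
      exact ⟨by simp [Scol, hq.2.2.1], by simp [Scol, hq.2.2.2], ne_of_lt hq.2.1⟩
    · simp only [Finset.mem_image] at hq
      obtain ⟨⟨x, y⟩, hxy, rfl⟩ := hq
      simp only [Pset, Finset.mem_filter, Finset.mem_univ, true_and] at hxy
      exact ⟨by simp [Scol, hxy.2.2.2], by simp [Scol, hxy.2.2.1], (ne_of_lt hxy.2.1).symm⟩
  have := Finset.card_le_card hsub
  rw [Finset.card_union_of_disjoint hdisj, hswap, Finset.offDiag_card] at this
  have hc : (Scol G l).card * ((Scol G l).card - 1)
      = (Scol G l).card * (Scol G l).card - (Scol G l).card := by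
    cases h : (Scol G l).card with
    | zero => simp
    | succ n => rw [Nat.succ_sub_one, Nat.mul_succ, Nat.add_sub_cancel]
  omega

-- c l * (c l - 1) ≤ 2 * S
lemma col_sq_le {p : ℕ} (G : SimpleGraph (Fin p)) (l : Fin p) :
    (Scol G l).card * ((Scol G l).card - 1) ≤ 2 * ∑ m : Fin p, (Scol G m).card := by
  have hsub : (Scol G l).offDiag ⊆
      Fpairs G ∪ (Fpairs G).image Prod.swap := by
    rintro ⟨a, b⟩ hab
    rw [Finset.mem_offDiag] at hab
    obtain ⟨ha, hb, hne⟩ := hab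
    simp only [Scol, Finset.mem_filter, Finset.mem_univ, true_and] at ha hb
    rw [Finset.mem_union]
    rcases lt_or_gt_of_ne hne with h | h
    · exact Or.inl (by simp [Fpairs, fillIn_trans ha hb h])
    · refine Or.inr ?_
      simp only [Finset.mem_image]
      exact ⟨(b, a), by simp [Fpairs, fillIn_trans hb ha h], rfl⟩
  have h1 := Finset.card_le_card hsub
  have h2 : (Fpairs G ∪ (Fpairs G).image Prod.swap).card ≤ 2 * (Fpairs G).card := by
    have := Finset.card_union_le (Fpairs G) ((Fpairs G).image Prod.swap)
    have himg : ((Fpairs G).image Prod.swap).card ≤ (Fpairs G).card :=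
      Finset.card_image_le
    omega
  rw [Finset.offDiag_card] at h1
  have hc : (Scol G l).card * ((Scol G l).card - 1)
      = (Scol G l).card * (Scol G l).card - (Scol G l).card := by
    cases h : (Scol G l).card with
    | zero => simp
    | succ n => rw [Nat.succ_sub_one, Nat.mul_succ, Nat.add_sub_cancel]
  rw [card_Fpairs] at h2
  omega


/-- The number of triples`G` is at most `n_L^{3/2}`. -/
theorem cholesky_cost_le_nL_pow_three_halves {p : ℕ} (G : SimpleGraph (Fin p)) :
    ((Finset.univ.filter (fun t : Fin p × Fin p × Fin p =>
        t.1 < t.2.1 ∧ t.2.1 < t.2.2 ∧ FillIn G t.1 t.2.1 ∧ FillIn G t.1 t.2.2)).card : ℝ)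
      ≤ (nL G : ℝ) ^ ((3 : ℝ) / 2) := by
  set T := (Finset.univ.filter (fun t : Fin p × Fin p × Fin p =>
      t.1 < t.2.1 ∧ t.2.1 < t.2.2 ∧ FillIn G t.1 t.2.1 ∧ FillIn G t.1 t.2.2)).card with hTdef
  set S := ∑ m : Fin p, (Scol G m).card with hSdef
  set K := Nat.sqrt (2 * S) with hKdef
  -- per column: c l - 1 ≤ K
  have hK : ∀ l : Fin p, (Scol G l).card - 1 ≤ K := by
    intro l
    rw [hKdef, Nat.le_sqrt]
    calc ((Scol G l).card - 1) * ((Scol G l).card - 1)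
        ≤ (Scol G l).card * ((Scol G l).card - 1) :=
          Nat.mul_le_mul_right _ (Nat.sub_le _ _)
      _ ≤ 2 * S := col_sq_le G l
  -- 2T ≤ K * S
  have h2T : 2 * T ≤ K * S := by
    rw [hTdef, triple_eq, Finset.mul_sum]
    rw [hSdef, Finset.mul_sum]
    refine Finset.sum_le_sum fun l _ => ?_
    calc 2 * (Pset G l).card ≤ (Scol G l).card * ((Scol G l).card - 1) :=
          two_card_Pset_le G l
      _ ≤ (Scol G l).card * K := Nat.mul_le_mul_left _ (hK l)
      _ = K * (Scol G l).card := Nat.mul_comm _ _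
  -- T^2 ≤ S^3
  have hT2 : T ^ 2 ≤ S ^ 3 := by
    have hKK : K * K ≤ 2 * S := by have := Nat.sqrt_le' (2 * S); rwa [Nat.pow_two] at this
    have h4 : (2 * T) * (2 * T) ≤ (K * S) * (K * S) := Nat.mul_le_mul h2T h2T
    have : (K * S) * (K * S) = (K * K) * (S * S) := by ring
    have h5 : (2 * T) * (2 * T) ≤ (2 * S) * (S * S) := by
      calc (2 * T) * (2 * T) ≤ (K * K) * (S * S) := by rw [← this]; exact h4
        _ ≤ (2 * S) * (S * S) := Nat.mul_le_mul_right _ hKK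
    nlinarith [h5]
  have hSle : S ≤ nL G := by
    rw [hSdef, nL]
    exact Finset.sum_le_sum fun m _ => by simp [nLcol, Scol]
  have hT3 : T ^ 2 ≤ (nL G) ^ 3 := hT2.trans (Nat.pow_le_pow_left hSle 3)
  have h0 : (0 : ℝ) ≤ (nL G : ℝ) := Nat.cast_nonneg _
  calc (T : ℝ) ≤ Real.sqrt ((nL G : ℝ) ^ 3) := by
        rw [Real.le_sqrt (Nat.cast_nonneg _) (by positivity)]
        exact_mod_cast hT3
    _ = (nL G : ℝ) ^ ((3 : ℝ) / 2) := by
        rw [Real.sqrt_eq_rpow, ← Real.rpow_natCast (nL G : ℝ) 3, ← Real.rpow_mul h0]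
        norm_num
end

section
/- Under the random-intercept crossed effects design: (i) for every index c, the off-diagonal row sum of U satisfies ∑_{c'≠c} U[c,c'] = K·U[c,c]; hence, with A = U − Diag(U) and D = K·Diag(U), one has Ū := Diag(U)^{−1/2} U Diag(U)^{−1/2} = I_p + K·(D^{−1/2} A D^{−1/2}). (ii) If K ≥ 2, the same holds for the restricted matrices: for every index c of U^(r), ∑_{c'≠c} U^(r)[c,c'] = (K−1)·U^(r)[c,c], and Ū^(r) := Diag(U^(r))^{−1/2} U^(r) Diag(U^(r))^{−1/2} = I_{p−1} + (K−1)·Ā^(r). -/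
/-!
Every row of `V` is a 0/1 vector with exactly `1 + K` ones (one for the intercept and one per
factor), and every row of `V^(r)` one with exactly `K` ones. For a Gram matrix `XᵀX` of such an
`X` with row sums `r`, the `c`-th row sum is `∑ᵢ X i c · r = r · (XᵀX) c c`, because
`X i c² = X i c`.
The normalized decomposition is then an entrywise identity that holds for any matrix with positive
diagonal and any scale `t > 0`; the diagonal is positive because every level (and the intercept)
is observed.
-/

open Matrix

namespace Crossed

/-- Coordinates: `none` is the intercept `θ₀`, `some ⟨k, a⟩` is level `a` of factor `k`. -/
abbrev Idx (K : ℕ) (G : Fin K → ℕ) := Option (Σ k : Fin K, Fin (G k))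

/-- Coordinates of the random effects only (intercept removed). -/
abbrev Lvl (K : ℕ) (G : Fin K → ℕ) := Σ k : Fin K, Fin (G k)

/-- The design matrix `V ∈ ℝ^{N×p}`. -/
noncomputable def V (K N : ℕ) (G : Fin K → ℕ) (g : Fin N → ∀ k : Fin K, Fin (G k)) :
    Matrix (Fin N) (Idx K G) ℝ :=
  fun i c => c.elim 1 (fun s => if g i s.1 = s.2 then 1 else 0)

/-- `U = Vᵀ V`. -/
noncomputable def U (K N : ℕ) (G : Fin K → ℕ) (g : Fin N → ∀ k : Fin K, Fin (G k)) :
    Matrix (Idx K G) (Idx K G) ℝ :=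
  (V K N G g)ᵀ * V K N G g

/-- `Ū = Diag(U)^{−1/2} U Diag(U)^{−1/2}`. -/
noncomputable def Ubar (K N : ℕ) (G : Fin K → ℕ) (g : Fin N → ∀ k : Fin K, Fin (G k)) :
    Matrix (Idx K G) (Idx K G) ℝ :=
  diagonal (fun c => (Real.sqrt (U K N G g c c))⁻¹) * U K N G g *
    diagonal (fun c => (Real.sqrt (U K N G g c c))⁻¹)

/-- The restricted design matrix `V^(r)` (intercept column removed). -/
noncomputable def Vr (K N : ℕ) (G : Fin K → ℕ) (g : Fin N → ∀ k : Fin K, Fin (G k)) :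
    Matrix (Fin N) (Lvl K G) ℝ :=
  fun i s => if g i s.1 = s.2 then 1 else 0

/-- `U^(r) = (V^(r))ᵀ V^(r)`. -/
noncomputable def Ur (K N : ℕ) (G : Fin K → ℕ) (g : Fin N → ∀ k : Fin K, Fin (G k)) :
    Matrix (Lvl K G) (Lvl K G) ℝ :=
  (Vr K N G g)ᵀ * Vr K N G g

/-- `A^(r) = U^(r) − Diag(U^(r))`. -/
noncomputable def Ar (K N : ℕ) (G : Fin K → ℕ) (g : Fin N → ∀ k : Fin K, Fin (G k)) :
    Matrix (Lvl K G) (Lvl K G) ℝ :=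
  Ur K N G g - diagonal (fun c => Ur K N G g c c)

/-- `A = U − Diag(U)` (full, intercept included). -/
noncomputable def A (K N : ℕ) (G : Fin K → ℕ) (g : Fin N → ∀ k : Fin K, Fin (G k)) :
    Matrix (Idx K G) (Idx K G) ℝ :=
  U K N G g - diagonal (fun c => U K N G g c c)

section Gram

variable {m n : Type*} [Fintype m]

lemma gram_diag_pos (X : Matrix m n ℝ) {c : n} (hc : ∃ i, X i c ≠ 0) :
    0 < (Xᵀ * X) c c := by
  obtain ⟨i, hi⟩ := hc
  simp only [mul_apply, transpose_apply]
  exact Finset.sum_pos' (fun j _ => mul_self_nonneg (X j c))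
    ⟨i, Finset.mem_univ i, mul_self_pos.mpr hi⟩

lemma gram_row_sum_eq [Fintype n] (X : Matrix m n ℝ) (hX : ∀ i c, X i c * X i c = X i c)
    {r : ℝ} (hrow : ∀ i, ∑ c, X i c = r) (c : n) :
    ∑ c', (Xᵀ * X) c c' = r * (Xᵀ * X) c c := by
  simp only [mul_apply, transpose_apply, hX]
  rw [Finset.sum_comm, Finset.mul_sum]
  refine Finset.sum_congr rfl fun i _ => ?_
  rw [← Finset.mul_sum, hrow, mul_comm]

lemma gram_offDiag_row_sum_eq [Fintype n] [DecidableEq n] (X : Matrix m n ℝ)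
    (hX : ∀ i c, X i c * X i c = X i c) {r : ℝ} (hrow : ∀ i, ∑ c, X i c = r) (c : n) :
    ∑ c' ∈ Finset.univ.filter (fun c' => c' ≠ c), (Xᵀ * X) c c' =
      (r - 1) * (Xᵀ * X) c c := by
  rw [Finset.filter_ne', Finset.sum_erase_eq_sub (Finset.mem_univ c),
    gram_row_sum_eq X hX hrow]
  ring

end Gram

lemma diagonal_inv_sqrt_conj_eq_one_add_smul {n : Type*} [Fintype n] [DecidableEq n]
    (M : Matrix n n ℝ) (hM : ∀ c, 0 < M c c) {t : ℝ} (ht : 0 < t) :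
    diagonal (fun c => (√(M c c))⁻¹) * M * diagonal (fun c => (√(M c c))⁻¹)
      = 1 + t • (diagonal (fun c => (√(t * M c c))⁻¹) * (M - diagonal (fun c => M c c)) *
          diagonal (fun c => (√(t * M c c))⁻¹)) := by
  ext c c'
  simp only [mul_diagonal, diagonal_mul, Matrix.add_apply, Matrix.smul_apply, one_apply,
    Matrix.sub_apply, diagonal_apply, smul_eq_mul]
  have hc := hM c
  have hc' := hM c'
  rcases eq_or_ne c c' with rfl | h
  · simp only [if_true, sub_self, mul_zero, zero_mul, add_zero]
    field_simp
    rw [Real.sq_sqrt hc.le]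
  · simp only [h, if_false, sub_zero, zero_add]
    rw [Real.sqrt_mul ht.le, Real.sqrt_mul ht.le]
    field_simp
    rw [Real.sq_sqrt ht.le]

section Design

variable {K N : ℕ} {G : Fin K → ℕ} (g : Fin N → ∀ k : Fin K, Fin (G k))

lemma Vr_mul_self (i : Fin N) (c : Lvl K G) :
    Vr K N G g i c * Vr K N G g i c = Vr K N G g i c := by
  simp only [Vr]; split_ifs <;> simp

lemma Vr_row_sum (i : Fin N) : ∑ c, Vr K N G g i c = K := by
  rw [Fintype.sum_sigma]
  simp [Vr]

lemma V_mul_self (i : Fin N) (c : Idx K G) :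
    V K N G g i c * V K N G g i c = V K N G g i c := by
  rcases c with _ | s
  · simp [V]
  · exact Vr_mul_self g i s

lemma V_row_sum (i : Fin N) : ∑ c, V K N G g i c = 1 + K := by
  rw [Fintype.sum_option]
  exact congrArg (1 + ·) (Vr_row_sum g i)

lemma Vr_col_ne_zero (hobs : ∀ (k : Fin K) (a : Fin (G k)), ∃ i, g i k = a) (c : Lvl K G) :
    ∃ i, Vr K N G g i c ≠ 0 := by
  obtain ⟨i, hi⟩ := hobs c.1 c.2
  exact ⟨i, by simp [Vr, hi]⟩

lemma V_col_ne_zero (hN : 1 ≤ N) (hobs : ∀ (k : Fin K) (a : Fin (G k)), ∃ i, g i k = a)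
    (c : Idx K G) : ∃ i, V K N G g i c ≠ 0 := by
  rcases c with _ | s
  · exact ⟨⟨0, hN⟩, by simp [V]⟩
  · exact Vr_col_ne_zero g hobs s

end Design

theorem rowsum_and_normalized_decomposition_general (K N : ℕ) (G : Fin K → ℕ)
    (g : Fin N → ∀ k : Fin K, Fin (G k))
    (hK : 1 ≤ K) (hN : 1 ≤ N)
    (hobs : ∀ (k : Fin K) (a : Fin (G k)), ∃ i, g i k = a) :
    ((∀ c : Idx K G,
        ∑ c' ∈ Finset.univ.filter (fun c' => c' ≠ c), U K N G g c c'
          = (K : ℝ) * U K N G g c c) ∧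
      Ubar K N G g = 1 + (K : ℝ) •
        (diagonal (fun c => (Real.sqrt ((K : ℝ) * U K N G g c c))⁻¹) * A K N G g *
          diagonal (fun c => (Real.sqrt ((K : ℝ) * U K N G g c c))⁻¹))) ∧
    (2 ≤ K →
      (∀ c : Lvl K G,
        ∑ c' ∈ Finset.univ.filter (fun c' => c' ≠ c), Ur K N G g c c'
          = ((K : ℝ) - 1) * Ur K N G g c c) ∧
      diagonal (fun c => (Real.sqrt (Ur K N G g c c))⁻¹) * Ur K N G g *
          diagonal (fun c => (Real.sqrt (Ur K N G g c c))⁻¹)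
        = 1 + ((K : ℝ) - 1) •
          (diagonal (fun c => (Real.sqrt (((K : ℝ) - 1) * Ur K N G g c c))⁻¹) *
            Ar K N G g *
            diagonal (fun c => (Real.sqrt (((K : ℝ) - 1) * Ur K N G g c c))⁻¹))) := by
  have hK_pos : (0 : ℝ) < K := by exact_mod_cast hK
  have hU_pos c := gram_diag_pos _ (V_col_ne_zero g hN hobs c)
  have hUr_pos c := gram_diag_pos _ (Vr_col_ne_zero g hobs c)
  refine ⟨⟨fun c => ?_, diagonal_inv_sqrt_conj_eq_one_add_smul _ hU_pos hK_pos⟩,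
    fun hK2 => ⟨fun c => ?_, diagonal_inv_sqrt_conj_eq_one_add_smul _ hUr_pos ?_⟩⟩
  · rw [U, gram_offDiag_row_sum_eq _ (V_mul_self g) (V_row_sum g)]
    ring
  · exact gram_offDiag_row_sum_eq _ (Vr_mul_self g) (Vr_row_sum g) c
  · have : (2 : ℝ) ≤ K := by exact_mod_cast hK2
    linarith

/-- (i) each off-diagonal row sum of `U` equals `K` times the diagonal entry, hence
`Ū = I + K·(D^{−1/2} A D^{−1/2})` with `A = U − Diag(U)` and `D = K·Diag(U)`;
(ii) for `K ≥ 2` the same holds for the restricted matrices with `K − 1` in place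
of `K`. -/
theorem rowsum_and_normalized_decomposition (K N : ℕ) (G : Fin K → ℕ)
    (g : Fin N → ∀ k : Fin K, Fin (G k))
    (hK : 1 ≤ K) (hGk : ∀ k, 1 ≤ G k) (hN : 1 ≤ N)
    (hobs : ∀ (k : Fin K) (a : Fin (G k)), ∃ i, g i k = a) :
    ((∀ c : Idx K G,
        ∑ c' ∈ Finset.univ.filter (fun c' => c' ≠ c), U K N G g c c'
          = (K : ℝ) * U K N G g c c) ∧
      Ubar K N G g = 1 + (K : ℝ) •
        (diagonal (fun c => (Real.sqrt ((K : ℝ) * U K N G g c c))⁻¹) * A K N G g *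
          diagonal (fun c => (Real.sqrt ((K : ℝ) * U K N G g c c))⁻¹))) ∧
    (2 ≤ K →
      (∀ c : Lvl K G,
        ∑ c' ∈ Finset.univ.filter (fun c' => c' ≠ c), Ur K N G g c c'
          = ((K : ℝ) - 1) * Ur K N G g c c) ∧
      diagonal (fun c => (Real.sqrt (Ur K N G g c c))⁻¹) * Ur K N G g *
          diagonal (fun c => (Real.sqrt (Ur K N G g c c))⁻¹)
        = 1 + ((K : ℝ) - 1) •
          (diagonal (fun c => (Real.sqrt (((K : ℝ) - 1) * Ur K N G g c c))⁻¹) *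
            Ar K N G g *
            diagonal (fun c => (Real.sqrt (((K : ℝ) - 1) * Ur K N G g c c))⁻¹))) :=
  rowsum_and_normalized_decomposition_general K N G g hK hN hobs

end Crossed
end

section
/- Under the random-intercept crossed effects design with K ≥ 2 and p − 1 = ∑_k G_k ≥ K+1, let T ∈ ℝ^{p×p} be diagonal with nonnegative entries (equal to T_k ≥ 0 on the block of factor k and T_0 ≥ 0 at θ_0), τ > 0, Q = T + τU, Q̄ = Diag(Q)^{−1/2} Q Diag(Q)^{−1/2} with eigenvalues μ̄_1 ≤ ⋯ ≤ μ̄_p, and let ν̄_1 ≤ ⋯ ≤ ν̄_{p−1} be the eigenvalues of Ā^(r). If ν̄_K ≤ 0 ≤ ν̄_{p−2}, then μ̄_{p−2} · (1 + (K−1)ν̄_K) ≤ μ̄_{K+1} · (1 + (K−1)ν̄_{p−2}); i.e., the effective condition number satisfies κ_{K+1,p−2}(Q̄) = μ̄_{p−2}/μ̄_{K+1} ≤ (1 + (K−1)ν̄_{p−2})/(1 + (K−1)ν̄_K) whenever the denominator is positive. -/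
/-!
Write `x = E u` for the vector supported on the levels with entries `x_s = w_s u_s`, where
`w_s² = Q_ss / (τ (K - 1) U_ss)`. Since `Q` and `τ U` agree off the diagonal, one gets
`xᵀ Q̄ x = ‖x‖² + uᵀ Ā u`, and `T ≥ 0` gives `(K - 1) w_s² ≥ 1`, i.e. `‖u‖² ≤ (K - 1) ‖x‖²`.
Hence `E` maps the span of the `p - 2` lowest eigenvectors of `Ā` (eigenvalues `≤ ν̄_{p-2}`,
which is `≥ 0`) onto a `(p - 2)`-dimensional space on which the Rayleigh quotient of `Q̄` is at
most `1 + (K - 1) ν̄_{p-2}`, and the span of the `p - K` highest ones (eigenvalues `≥ ν̄_K`,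
which is `≤ 0`) onto a space on which it is at least `1 + (K - 1) ν̄_K`; Courant–Fischer turns
these into bounds on `μ̄_{p-2}` and `μ̄_{K+1}`. Finally `1 + (K - 1) ν̄_K ≥ 0` because
`Ā + (K - 1)⁻¹ I` is a Gram matrix.
-/

open Matrix

namespace Crossed

/-- The posterior precision matrix `Q = T + τ U` (`T` diagonal). -/
noncomputable def Q (K N : ℕ) (G : Fin K → ℕ) (g : Fin N → ∀ k : Fin K, Fin (G k))
    (T0 : ℝ) (Tv : Fin K → ℝ) (τ : ℝ) : Matrix (Idx K G) (Idx K G) ℝ :=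
  diagonal (fun c => c.elim T0 (fun s => Tv s.1)) + τ • U K N G g

/-- The Jacobi preconditioned matrix `Q̄ = Diag(Q)^{−1/2} Q Diag(Q)^{−1/2}`. -/
noncomputable def Qbar (K N : ℕ) (G : Fin K → ℕ) (g : Fin N → ∀ k : Fin K, Fin (G k))
    (T0 : ℝ) (Tv : Fin K → ℝ) (τ : ℝ) : Matrix (Idx K G) (Idx K G) ℝ :=
  diagonal (fun c => (Real.sqrt (Q K N G g T0 Tv τ c c))⁻¹) * Q K N G g T0 Tv τ *
    diagonal (fun c => (Real.sqrt (Q K N G g T0 Tv τ c c))⁻¹)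

/-- `Ā^(r) = (D^(r))^{−1/2} A^(r) (D^(r))^{−1/2}` with `D^(r) = (K−1)·Diag(U^(r))`. -/
noncomputable def Abar (K N : ℕ) (G : Fin K → ℕ) (g : Fin N → ∀ k : Fin K, Fin (G k)) :
    Matrix (Lvl K G) (Lvl K G) ℝ :=
  diagonal (fun c => (Real.sqrt (((K : ℝ) - 1) * Ur K N G g c c))⁻¹) * Ar K N G g *
    diagonal (fun c => (Real.sqrt (((K : ℝ) - 1) * Ur K N G g c c))⁻¹)

end Crossed

namespace OrthonormalBasis

variable {ι n : Type*} [Fintype ι] [Fintype n] (b : OrthonormalBasis ι ℝ (EuclideanSpace ℝ n))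

theorem dotProduct_eq_inner_toLp (c : ι) (x : n → ℝ) :
    ⇑(b c) ⬝ᵥ x = inner ℝ (b c) (WithLp.toLp 2 x) := by
  rw [EuclideanSpace.inner_eq_star_dotProduct, star_trivial, dotProduct_comm]

theorem sum_sq_dotProduct (x : n → ℝ) : ∑ c, (⇑(b c) ⬝ᵥ x) ^ 2 = x ⬝ᵥ x := by
  simp_rw [dotProduct_eq_inner_toLp, sq]
  conv_lhs => enter [2, c, 1]; rw [real_inner_comm]
  rw [b.sum_inner_mul_inner, EuclideanSpace.inner_toLp_toLp, star_trivial]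

theorem dotProduct_eq_zero_of_mem_span_image {s : Set ι} {x : n → ℝ}
    (hx : x ∈ Submodule.span ℝ ((fun c => ⇑(b c)) '' s)) {c : ι} (hc : c ∉ s) :
    ⇑(b c) ⬝ᵥ x = 0 := by
  induction hx using Submodule.span_induction with
  | mem y hy =>
    obtain ⟨d, hd, rfl⟩ := hy
    rw [dotProduct_eq_inner_toLp]
    exact b.orthonormal.2 (ne_of_mem_of_not_mem hd hc).symm
  | zero => simp
  | add y z _ _ hy hz => simp [dotProduct_add, hy, hz]
  | smul a y _ hy => simp [dotProduct_smul, hy]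

theorem finrank_span_image (s : Finset ι) :
    Module.finrank ℝ (Submodule.span ℝ ((fun c => ⇑(b c)) '' (s : Set ι))) = s.card := by
  have hli : LinearIndependent ℝ (fun c : (s : Set ι) => ⇑(b c)) :=
    (b.orthonormal.linearIndependent.map' _ (WithLp.linearEquiv 2 ℝ (n → ℝ)).ker).comp _
      Subtype.val_injective
  rw [Set.image_eq_range, finrank_span_eq_card hli]
  simp

end OrthonormalBasis

theorem Submodule.exists_mem_mem_ne_zero_of_finrank_lt_add {K V : Type*} [DivisionRing K]
    [AddCommGroup V] [Module K V] [FiniteDimensional K V] {W Z : Submodule K V}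
    (h : Module.finrank K V < Module.finrank K W + Module.finrank K Z) :
    ∃ x ∈ W, x ∈ Z ∧ x ≠ 0 := by
  by_contra! hWZ
  exact h.not_ge (Submodule.finrank_add_finrank_le_of_disjoint (Submodule.disjoint_def.2 hWZ))

theorem Matrix.dotProduct_self_pos {n : Type*} [Fintype n] {x : n → ℝ} (hx : x ≠ 0) :
    0 < x ⬝ᵥ x := by
  simpa using dotProduct_star_self_pos_iff.2 hx

theorem Matrix.mulVec_dotProduct_mulVec_mulVec {m n R : Type*} [Fintype m] [Fintype n]
    [CommSemiring R] (P : Matrix m n R) (M : Matrix m m R) (u : n → R) :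
    (P *ᵥ u) ⬝ᵥ (M *ᵥ (P *ᵥ u)) = u ⬝ᵥ ((Pᵀ * M * P) *ᵥ u) := by
  rw [← mulVec_mulVec, ← mulVec_mulVec, dotProduct_mulVec u Pᵀ, vecMul_transpose]

theorem Matrix.mulVec_dotProduct_mulVec_self {m n R : Type*} [Fintype m] [Fintype n]
    [CommSemiring R] (P : Matrix m n R) (u : n → R) :
    (P *ᵥ u) ⬝ᵥ (P *ᵥ u) = u ⬝ᵥ ((Pᵀ * P) *ᵥ u) := by
  rw [← mulVec_mulVec, dotProduct_mulVec u Pᵀ, vecMul_transpose]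

namespace Matrix.IsHermitian

variable {n : Type*} [Fintype n] [DecidableEq n] {A : Matrix n n ℝ} (hA : A.IsHermitian)

theorem eigenvectorBasis_dotProduct_mulVec (c : n) (x : n → ℝ) :
    ⇑(hA.eigenvectorBasis c) ⬝ᵥ (A *ᵥ x) = hA.eigenvalues c * (⇑(hA.eigenvectorBasis c) ⬝ᵥ x) := by
  have hAt : Aᵀ = A := by simpa [conjTranspose_eq_transpose_of_trivial] using hA.eq
  rw [dotProduct_mulVec, ← mulVec_transpose, hAt, hA.mulVec_eigenvectorBasis, smul_dotProduct,
    smul_eq_mul]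

theorem dotProduct_mulVec_eq_sum (x : n → ℝ) :
    x ⬝ᵥ (A *ᵥ x) = ∑ c, hA.eigenvalues c * (⇑(hA.eigenvectorBasis c) ⬝ᵥ x) ^ 2 := by
  have h := hA.eigenvectorBasis.sum_inner_mul_inner (WithLp.toLp 2 x) (WithLp.toLp 2 (A *ᵥ x))
  rw [EuclideanSpace.inner_toLp_toLp, star_trivial, dotProduct_comm] at h
  rw [← h]
  refine Finset.sum_congr rfl fun c _ => ?_
  rw [real_inner_comm, ← OrthonormalBasis.dotProduct_eq_inner_toLp,
    ← OrthonormalBasis.dotProduct_eq_inner_toLp, eigenvectorBasis_dotProduct_mulVec]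
  ring

theorem dotProduct_mulVec_le_of_mem_span {s : Set n} {t : ℝ} (ht : ∀ c ∈ s, hA.eigenvalues c ≤ t)
    {x : n → ℝ} (hx : x ∈ Submodule.span ℝ ((fun c => ⇑(hA.eigenvectorBasis c)) '' s)) :
    x ⬝ᵥ (A *ᵥ x) ≤ t * (x ⬝ᵥ x) := by
  rw [hA.dotProduct_mulVec_eq_sum, ← hA.eigenvectorBasis.sum_sq_dotProduct, Finset.mul_sum]
  refine Finset.sum_le_sum fun c _ => ?_
  by_cases hc : c ∈ s
  · exact mul_le_mul_of_nonneg_right (ht c hc) (sq_nonneg _)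
  · simp [hA.eigenvectorBasis.dotProduct_eq_zero_of_mem_span_image hx hc]

theorem le_dotProduct_mulVec_of_mem_span {s : Set n} {t : ℝ} (ht : ∀ c ∈ s, t ≤ hA.eigenvalues c)
    {x : n → ℝ} (hx : x ∈ Submodule.span ℝ ((fun c => ⇑(hA.eigenvectorBasis c)) '' s)) :
    t * (x ⬝ᵥ x) ≤ x ⬝ᵥ (A *ᵥ x) := by
  rw [hA.dotProduct_mulVec_eq_sum, ← hA.eigenvectorBasis.sum_sq_dotProduct, Finset.mul_sum]
  refine Finset.sum_le_sum fun c _ => ?_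
  by_cases hc : c ∈ s
  · exact mul_le_mul_of_nonneg_right (ht c hc) (sq_nonneg _)
  · simp [hA.eigenvectorBasis.dotProduct_eq_zero_of_mem_span_image hx hc]

theorem exists_finrank_eq_forall_dotProduct_mulVec_le {μ : Fin (Fintype.card n) → ℝ}
    (hμmono : Monotone μ) (e : n ≃ Fin (Fintype.card n)) (hμ : ∀ c, hA.eigenvalues c = μ (e c))
    (i : Fin (Fintype.card n)) :
    ∃ W : Submodule ℝ (n → ℝ), Module.finrank ℝ W = i + 1 ∧
      ∀ x ∈ W, x ⬝ᵥ (A *ᵥ x) ≤ μ i * (x ⬝ᵥ x) := by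
  refine ⟨_, (hA.eigenvectorBasis.finrank_span_image ((Finset.Iic i).map e.symm.toEmbedding)).trans
    (by simp), fun x hx => hA.dotProduct_mulVec_le_of_mem_span (fun c hc => ?_) hx⟩
  simp only [Finset.coe_map, Equiv.coe_toEmbedding, Set.mem_image, Finset.mem_coe,
    Finset.mem_Iic] at hc
  obtain ⟨j, hj, rfl⟩ := hc
  rw [hμ, Equiv.apply_symm_apply]
  exact hμmono hj

theorem exists_finrank_eq_forall_le_dotProduct_mulVec {μ : Fin (Fintype.card n) → ℝ}
    (hμmono : Monotone μ) (e : n ≃ Fin (Fintype.card n)) (hμ : ∀ c, hA.eigenvalues c = μ (e c))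
    (i : Fin (Fintype.card n)) :
    ∃ W : Submodule ℝ (n → ℝ), Module.finrank ℝ W = Fintype.card n - i ∧
      ∀ x ∈ W, μ i * (x ⬝ᵥ x) ≤ x ⬝ᵥ (A *ᵥ x) := by
  refine ⟨_, (hA.eigenvectorBasis.finrank_span_image ((Finset.Ici i).map e.symm.toEmbedding)).trans
    (by simp), fun x hx => hA.le_dotProduct_mulVec_of_mem_span (fun c hc => ?_) hx⟩
  simp only [Finset.coe_map, Equiv.coe_toEmbedding, Set.mem_image, Finset.mem_coe,
    Finset.mem_Ici] at hc
  obtain ⟨j, hj, rfl⟩ := hc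
  rw [hμ, Equiv.apply_symm_apply]
  exact hμmono hj

theorem eigenvalue_le_of_forall_dotProduct_mulVec_le {μ : Fin (Fintype.card n) → ℝ}
    (hμmono : Monotone μ) (e : n ≃ Fin (Fintype.card n)) (hμ : ∀ c, hA.eigenvalues c = μ (e c))
    (i : Fin (Fintype.card n)) {t : ℝ} (W : Submodule ℝ (n → ℝ))
    (hdim : i + 1 ≤ Module.finrank ℝ W) (hW : ∀ x ∈ W, x ⬝ᵥ (A *ᵥ x) ≤ t * (x ⬝ᵥ x)) :
    μ i ≤ t := by
  obtain ⟨Z, hZdim, hZ⟩ := hA.exists_finrank_eq_forall_le_dotProduct_mulVec hμmono e hμ i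
  obtain ⟨x, hxW, hxZ, hx0⟩ : ∃ x ∈ W, x ∈ Z ∧ x ≠ 0 :=
    Submodule.exists_mem_mem_ne_zero_of_finrank_lt_add (by simp; omega)
  exact le_of_mul_le_mul_right ((hZ x hxZ).trans (hW x hxW)) (dotProduct_self_pos hx0)

theorem le_eigenvalue_of_forall_le_dotProduct_mulVec {μ : Fin (Fintype.card n) → ℝ}
    (hμmono : Monotone μ) (e : n ≃ Fin (Fintype.card n)) (hμ : ∀ c, hA.eigenvalues c = μ (e c))
    (i : Fin (Fintype.card n)) {t : ℝ} (W : Submodule ℝ (n → ℝ))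
    (hdim : Fintype.card n - i ≤ Module.finrank ℝ W)
    (hW : ∀ x ∈ W, t * (x ⬝ᵥ x) ≤ x ⬝ᵥ (A *ᵥ x)) :
    t ≤ μ i := by
  obtain ⟨Z, hZdim, hZ⟩ := hA.exists_finrank_eq_forall_dotProduct_mulVec_le hμmono e hμ i
  obtain ⟨x, hxW, hxZ, hx0⟩ : ∃ x ∈ W, x ∈ Z ∧ x ≠ 0 :=
    Submodule.exists_mem_mem_ne_zero_of_finrank_lt_add (by simp; omega)
  exact le_of_mul_le_mul_right ((hW x hxW).trans (hZ x hxZ)) (dotProduct_self_pos hx0)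

end Matrix.IsHermitian
namespace Crossed

noncomputable def weight (K N : ℕ) (G : Fin K → ℕ) (g : Fin N → ∀ k : Fin K, Fin (G k))
    (T0 : ℝ) (Tv : Fin K → ℝ) (τ : ℝ) (s : Lvl K G) : ℝ :=
  √(Q K N G g T0 Tv τ (some s) (some s)) / √(τ * (((K : ℝ) - 1) * Ur K N G g s s))

noncomputable def embed (K N : ℕ) (G : Fin K → ℕ) (g : Fin N → ∀ k : Fin K, Fin (G k))
    (T0 : ℝ) (Tv : Fin K → ℝ) (τ : ℝ) : Matrix (Idx K G) (Lvl K G) ℝ :=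
  of fun c t => if c = some t then weight K N G g T0 Tv τ t else 0

variable {K N : ℕ} {G : Fin K → ℕ} {g : Fin N → ∀ k : Fin K, Fin (G k)} {T0 : ℝ}
  {Tv : Fin K → ℝ} {τ : ℝ}

theorem Ur_self_pos (hobs : ∀ (k : Fin K) (a : Fin (G k)), ∃ i, g i k = a) (s : Lvl K G) :
    0 < Ur K N G g s s := by
  obtain ⟨i, hi⟩ := hobs s.1 s.2
  simp only [Ur, mul_apply, transpose_apply, Vr]
  exact Finset.sum_pos' (fun j _ => by positivity) ⟨i, Finset.mem_univ _, by simp [hi]⟩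

theorem Ar_apply (s t : Lvl K G) : Ar K N G g s t = if s = t then 0 else Ur K N G g s t := by
  by_cases h : s = t
  · subst h; simp [Ar]
  · simp [Ar, h]

theorem Q_some_some (s t : Lvl K G) :
    Q K N G g T0 Tv τ (some s) (some t) = (if s = t then Tv s.1 else 0) + τ * Ur K N G g s t := by
  simp [Q, U, Ur, V, Vr, diagonal_apply, mul_apply]

theorem Q_some_self_pos (hobs : ∀ (k : Fin K) (a : Fin (G k)), ∃ i, g i k = a)
    (hTv : ∀ k, 0 ≤ Tv k) (hτ : 0 < τ) (s : Lvl K G) :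
    0 < Q K N G g T0 Tv τ (some s) (some s) := by
  rw [Q_some_some, if_pos rfl]
  exact add_pos_of_nonneg_of_pos (hTv s.1) (mul_pos hτ (Ur_self_pos hobs s))

theorem Qbar_apply (c d : Idx K G) :
    Qbar K N G g T0 Tv τ c d = (√(Q K N G g T0 Tv τ c c))⁻¹ * Q K N G g T0 Tv τ c d *
      (√(Q K N G g T0 Tv τ d d))⁻¹ := by
  simp [Qbar, mul_diagonal, diagonal_mul]

theorem Abar_apply (s t : Lvl K G) :
    Abar K N G g s t = (√(((K : ℝ) - 1) * Ur K N G g s s))⁻¹ * Ar K N G g s t *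
      (√(((K : ℝ) - 1) * Ur K N G g t t))⁻¹ := by
  simp [Abar, mul_diagonal, diagonal_mul]

theorem Abar_add_smul_one (hK : 2 ≤ K) (hobs : ∀ (k : Fin K) (a : Fin (G k)), ∃ i, g i k = a) :
    Abar K N G g + ((K : ℝ) - 1)⁻¹ • 1 =
      (Vr K N G g * diagonal fun s => (√(((K : ℝ) - 1) * Ur K N G g s s))⁻¹)ᵀ *
        (Vr K N G g * diagonal fun s => (√(((K : ℝ) - 1) * Ur K N G g s s))⁻¹) := by
  have hK1 : (0 : ℝ) < K - 1 := sub_pos.2 (Nat.one_lt_cast.2 hK)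
  rw [transpose_mul, diagonal_transpose, Matrix.mul_assoc, ← Matrix.mul_assoc (Vr K N G g)ᵀ]
  ext s t
  rw [Matrix.add_apply, Abar_apply, Ar_apply, diagonal_mul, mul_diagonal]
  change _ = _ * (Ur K N G g s t * _)
  by_cases hst : s = t
  · subst hst
    have hU := Ur_self_pos hobs s
    rw [if_pos rfl, Matrix.smul_apply, one_apply_eq, smul_eq_mul, mul_zero, zero_mul, zero_add]
    field_simp
    rw [Real.sq_sqrt (by positivity)]
  · rw [if_neg hst, Matrix.smul_apply, one_apply_ne hst]
    ring

theorem neg_inv_mul_dotProduct_self_le_Abar (hK : 2 ≤ K)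
    (hobs : ∀ (k : Fin K) (a : Fin (G k)), ∃ i, g i k = a) (u : Lvl K G → ℝ) :
    -((K : ℝ) - 1)⁻¹ * (u ⬝ᵥ u) ≤ u ⬝ᵥ (Abar K N G g *ᵥ u) := by
  have h := congrArg (fun M => u ⬝ᵥ (M *ᵥ u)) (Abar_add_smul_one (N := N) (g := g) hK hobs)
  simp only [← mulVec_dotProduct_mulVec_self, add_mulVec, smul_mulVec, one_mulVec, dotProduct_add,
    dotProduct_smul, smul_eq_mul] at h
  have hnonneg := dotProduct_star_self_nonneg ((Vr K N G g *
    diagonal fun s => (√(((K : ℝ) - 1) * Ur K N G g s s))⁻¹) *ᵥ u)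
  rw [star_trivial] at hnonneg
  linarith

theorem weight_pos (hK : 2 ≤ K) (hobs : ∀ (k : Fin K) (a : Fin (G k)), ∃ i, g i k = a)
    (hTv : ∀ k, 0 ≤ Tv k) (hτ : 0 < τ) (s : Lvl K G) : 0 < weight K N G g T0 Tv τ s := by
  have hK1 : (0 : ℝ) < K - 1 := sub_pos.2 (Nat.one_lt_cast.2 hK)
  have hQ := Q_some_self_pos (T0 := T0) hobs hTv hτ s
  have hU := Ur_self_pos hobs s
  unfold weight
  positivity

theorem one_le_mul_weight_sq (hK : 2 ≤ K) (hobs : ∀ (k : Fin K) (a : Fin (G k)), ∃ i, g i k = a)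
    (hTv : ∀ k, 0 ≤ Tv k) (hτ : 0 < τ) (s : Lvl K G) :
    1 ≤ ((K : ℝ) - 1) * weight K N G g T0 Tv τ s ^ 2 := by
  have hK1 : (0 : ℝ) < K - 1 := sub_pos.2 (Nat.one_lt_cast.2 hK)
  have hQ := Q_some_self_pos (T0 := T0) hobs hTv hτ s
  have hU := Ur_self_pos hobs s
  rw [weight, div_pow, Real.sq_sqrt hQ.le, Real.sq_sqrt (by positivity), Q_some_some, if_pos rfl,
    mul_div_assoc', le_div_iff₀ (by positivity)]
  nlinarith [hTv s.1]

theorem embed_mulVec_some (u : Lvl K G → ℝ) (s : Lvl K G) :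
    (embed K N G g T0 Tv τ *ᵥ u) (some s) = weight K N G g T0 Tv τ s * u s := by
  simp [embed, mulVec, dotProduct]

theorem injective_embed_mulVec (hK : 2 ≤ K) (hobs : ∀ (k : Fin K) (a : Fin (G k)), ∃ i, g i k = a)
    (hTv : ∀ k, 0 ≤ Tv k) (hτ : 0 < τ) :
    Function.Injective (embed K N G g T0 Tv τ *ᵥ ·) := by
  intro u v h
  funext s
  have hs := congrFun h (some s)
  simp only [embed_mulVec_some] at hs
  exact mul_left_cancel₀ (weight_pos hK hobs hTv hτ s).ne' hs

theorem dotProduct_self_le_embed_mulVec (hK : 2 ≤ K)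
    (hobs : ∀ (k : Fin K) (a : Fin (G k)), ∃ i, g i k = a) (hTv : ∀ k, 0 ≤ Tv k) (hτ : 0 < τ)
    (u : Lvl K G → ℝ) :
    u ⬝ᵥ u ≤ ((K : ℝ) - 1) *
      ((embed K N G g T0 Tv τ *ᵥ u) ⬝ᵥ (embed K N G g T0 Tv τ *ᵥ u)) := by
  have hnone : (embed K N G g T0 Tv τ *ᵥ u) none = 0 := by simp [embed, mulVec, dotProduct]
  simp only [dotProduct, Fintype.sum_option, hnone, embed_mulVec_some, mul_zero, zero_add,
    Finset.mul_sum]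
  refine Finset.sum_le_sum fun s _ => ?_
  nlinarith [one_le_mul_weight_sq (N := N) (T0 := T0) hK hobs hTv hτ s, mul_self_nonneg (u s)]

theorem transpose_embed_mul_mul_embed_apply (M : Matrix (Idx K G) (Idx K G) ℝ) (s t : Lvl K G) :
    ((embed K N G g T0 Tv τ)ᵀ * M * embed K N G g T0 Tv τ) s t =
      weight K N G g T0 Tv τ s * M (some s) (some t) * weight K N G g T0 Tv τ t := by
  simp [embed, mul_apply]

theorem transpose_embed_mul_Qbar_mul_embed (hK : 2 ≤ K)
    (hobs : ∀ (k : Fin K) (a : Fin (G k)), ∃ i, g i k = a) (hTv : ∀ k, 0 ≤ Tv k) (hτ : 0 < τ) :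
    (embed K N G g T0 Tv τ)ᵀ * Qbar K N G g T0 Tv τ * embed K N G g T0 Tv τ =
      (embed K N G g T0 Tv τ)ᵀ * embed K N G g T0 Tv τ + Abar K N G g := by
  have hK1 : (0 : ℝ) < K - 1 := sub_pos.2 (Nat.one_lt_cast.2 hK)
  conv_rhs => rw [← Matrix.mul_one (embed K N G g T0 Tv τ)ᵀ]
  ext s t
  rw [Matrix.add_apply, transpose_embed_mul_mul_embed_apply, transpose_embed_mul_mul_embed_apply,
    Qbar_apply, Abar_apply, Ar_apply]
  have hQs := Q_some_self_pos (T0 := T0) hobs hTv hτ s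
  have hUs := Ur_self_pos hobs s
  by_cases hst : s = t
  · subst hst
    have hQbar : (√(Q K N G g T0 Tv τ (some s) (some s)))⁻¹ * Q K N G g T0 Tv τ (some s) (some s) *
        (√(Q K N G g T0 Tv τ (some s) (some s)))⁻¹ = 1 := by
      field_simp
      rw [Real.sq_sqrt hQs.le]
    rw [if_pos rfl, one_apply_eq, hQbar, mul_zero, zero_mul, add_zero]
  · have hQt := Q_some_self_pos (T0 := T0) hobs hTv hτ t
    rw [if_neg hst, Q_some_some s t, if_neg hst, one_apply_ne (by simpa using hst), weight, weight,
      Real.sqrt_mul hτ.le, Real.sqrt_mul hτ.le]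
    field_simp
    rw [Real.sq_sqrt hτ.le]
    ring

theorem embed_mulVec_dotProduct_Qbar_mulVec (hK : 2 ≤ K)
    (hobs : ∀ (k : Fin K) (a : Fin (G k)), ∃ i, g i k = a) (hTv : ∀ k, 0 ≤ Tv k) (hτ : 0 < τ)
    (u : Lvl K G → ℝ) :
    (embed K N G g T0 Tv τ *ᵥ u) ⬝ᵥ (Qbar K N G g T0 Tv τ *ᵥ (embed K N G g T0 Tv τ *ᵥ u)) =
      (embed K N G g T0 Tv τ *ᵥ u) ⬝ᵥ (embed K N G g T0 Tv τ *ᵥ u) + u ⬝ᵥ (Abar K N G g *ᵥ u) := by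
  rw [mulVec_dotProduct_mulVec_mulVec, transpose_embed_mul_Qbar_mul_embed hK hobs hTv hτ,
    add_mulVec, dotProduct_add, mulVec_dotProduct_mulVec_self]

theorem embed_mulVec_dotProduct_Qbar_mulVec_le (hK : 2 ≤ K)
    (hobs : ∀ (k : Fin K) (a : Fin (G k)), ∃ i, g i k = a) (hTv : ∀ k, 0 ≤ Tv k) (hτ : 0 < τ)
    {t : ℝ} (ht : 0 ≤ t) {u : Lvl K G → ℝ} (hu : u ⬝ᵥ (Abar K N G g *ᵥ u) ≤ t * (u ⬝ᵥ u)) :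
    (embed K N G g T0 Tv τ *ᵥ u) ⬝ᵥ (Qbar K N G g T0 Tv τ *ᵥ (embed K N G g T0 Tv τ *ᵥ u)) ≤
      (1 + ((K : ℝ) - 1) * t) * ((embed K N G g T0 Tv τ *ᵥ u) ⬝ᵥ (embed K N G g T0 Tv τ *ᵥ u)) := by
  have hnorm := dotProduct_self_le_embed_mulVec (T0 := T0) hK hobs hTv hτ u
  rw [embed_mulVec_dotProduct_Qbar_mulVec hK hobs hTv hτ]
  nlinarith

theorem le_embed_mulVec_dotProduct_Qbar_mulVec (hK : 2 ≤ K)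
    (hobs : ∀ (k : Fin K) (a : Fin (G k)), ∃ i, g i k = a) (hTv : ∀ k, 0 ≤ Tv k) (hτ : 0 < τ)
    {t : ℝ} (ht : t ≤ 0) {u : Lvl K G → ℝ} (hu : t * (u ⬝ᵥ u) ≤ u ⬝ᵥ (Abar K N G g *ᵥ u)) :
    (1 + ((K : ℝ) - 1) * t) * ((embed K N G g T0 Tv τ *ᵥ u) ⬝ᵥ (embed K N G g T0 Tv τ *ᵥ u)) ≤
      (embed K N G g T0 Tv τ *ᵥ u) ⬝ᵥ (Qbar K N G g T0 Tv τ *ᵥ (embed K N G g T0 Tv τ *ᵥ u)) := by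
  have hnorm := dotProduct_self_le_embed_mulVec (T0 := T0) hK hobs hTv hτ u
  rw [embed_mulVec_dotProduct_Qbar_mulVec hK hobs hTv hτ]
  nlinarith

theorem neg_inv_le_Abar_eigenvalue (hK : 2 ≤ K)
    (hobs : ∀ (k : Fin K) (a : Fin (G k)), ∃ i, g i k = a) (hA : (Abar K N G g).IsHermitian)
    {ν : Fin (Fintype.card (Lvl K G)) → ℝ} (hνmono : Monotone ν)
    (eA : Lvl K G ≃ Fin (Fintype.card (Lvl K G))) (hν : ∀ c, hA.eigenvalues c = ν (eA c))
    (a : Fin (Fintype.card (Lvl K G))) :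
    -((K : ℝ) - 1)⁻¹ ≤ ν a :=
  hA.le_eigenvalue_of_forall_le_dotProduct_mulVec hνmono eA hν a ⊤ (by simp)
    fun u _ => neg_inv_mul_dotProduct_self_le_Abar hK hobs u

theorem Qbar_eigenvalue_le (hK : 2 ≤ K) (hobs : ∀ (k : Fin K) (a : Fin (G k)), ∃ i, g i k = a)
    (hTv : ∀ k, 0 ≤ Tv k) (hτ : 0 < τ) (hQ : (Qbar K N G g T0 Tv τ).IsHermitian)
    {μ : Fin (Fintype.card (Idx K G)) → ℝ} (hμmono : Monotone μ)
    (eQ : Idx K G ≃ Fin (Fintype.card (Idx K G))) (hμ : ∀ c, hQ.eigenvalues c = μ (eQ c))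
    (hA : (Abar K N G g).IsHermitian)
    {ν : Fin (Fintype.card (Lvl K G)) → ℝ} (hνmono : Monotone ν)
    (eA : Lvl K G ≃ Fin (Fintype.card (Lvl K G))) (hν : ∀ c, hA.eigenvalues c = ν (eA c))
    (i : Fin (Fintype.card (Idx K G))) (b : Fin (Fintype.card (Lvl K G))) (hib : (i : ℕ) ≤ b)
    (hνb : 0 ≤ ν b) :
    μ i ≤ 1 + ((K : ℝ) - 1) * ν b := by
  obtain ⟨E, hEdim, hE⟩ := hA.exists_finrank_eq_forall_dotProduct_mulVec_le hνmono eA hν b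
  refine hQ.eigenvalue_le_of_forall_dotProduct_mulVec_le hμmono eQ hμ i
    (E.map (embed K N G g T0 Tv τ).mulVecLin) ?_ ?_
  · rw [← (Submodule.equivMapOfInjective _ (injective_embed_mulVec hK hobs hTv hτ) E).finrank_eq]
    omega
  · rintro _ ⟨u, hu, rfl⟩
    exact embed_mulVec_dotProduct_Qbar_mulVec_le hK hobs hTv hτ hνb (hE u hu)

theorem le_Qbar_eigenvalue (hK : 2 ≤ K) (hobs : ∀ (k : Fin K) (a : Fin (G k)), ∃ i, g i k = a)
    (hTv : ∀ k, 0 ≤ Tv k) (hτ : 0 < τ) (hQ : (Qbar K N G g T0 Tv τ).IsHermitian)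
    {μ : Fin (Fintype.card (Idx K G)) → ℝ} (hμmono : Monotone μ)
    (eQ : Idx K G ≃ Fin (Fintype.card (Idx K G))) (hμ : ∀ c, hQ.eigenvalues c = μ (eQ c))
    (hA : (Abar K N G g).IsHermitian)
    {ν : Fin (Fintype.card (Lvl K G)) → ℝ} (hνmono : Monotone ν)
    (eA : Lvl K G ≃ Fin (Fintype.card (Lvl K G))) (hν : ∀ c, hA.eigenvalues c = ν (eA c))
    (j : Fin (Fintype.card (Idx K G))) (a : Fin (Fintype.card (Lvl K G))) (haj : (a : ℕ) < j)
    (hνa : ν a ≤ 0) :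
    1 + ((K : ℝ) - 1) * ν a ≤ μ j := by
  obtain ⟨E, hEdim, hE⟩ := hA.exists_finrank_eq_forall_le_dotProduct_mulVec hνmono eA hν a
  refine hQ.le_eigenvalue_of_forall_le_dotProduct_mulVec hμmono eQ hμ j
    (E.map (embed K N G g T0 Tv τ).mulVecLin) ?_ ?_
  · rw [← (Submodule.equivMapOfInjective _ (injective_embed_mulVec hK hobs hTv hτ) E).finrank_eq,
      hEdim]
    have : Fintype.card (Idx K G) = Fintype.card (Lvl K G) + 1 := Fintype.card_option
    omega
  · rintro _ ⟨u, hu, rfl⟩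
    exact le_embed_mulVec_dotProduct_Qbar_mulVec hK hobs hTv hτ hνa (hE u hu)

/-- Eigenvalues are indexed from `0`: `μ̄_{p−2}`, `μ̄_{K+1}`, `ν̄_K` and `ν̄_{p−2}` are
`μ i`, `μ j`, `ν a` and `ν b` below. -/
theorem effective_condition_number_bound_general (K N : ℕ) (G : Fin K → ℕ)
    (g : Fin N → ∀ k : Fin K, Fin (G k))
    (hK : 2 ≤ K)
    (hobs : ∀ (k : Fin K) (a : Fin (G k)), ∃ i, g i k = a)
    (T0 : ℝ) (Tv : Fin K → ℝ) (τ : ℝ)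
    (hTv : ∀ k, 0 ≤ Tv k) (hτ : 0 < τ)
    (hQ : (Qbar K N G g T0 Tv τ).IsHermitian)
    (μ : Fin (Fintype.card (Idx K G)) → ℝ) (hμmono : Monotone μ)
    (eQ : Idx K G ≃ Fin (Fintype.card (Idx K G)))
    (hμ : ∀ c, hQ.eigenvalues c = μ (eQ c))
    (hA : (Abar K N G g).IsHermitian)
    (ν : Fin (Fintype.card (Lvl K G)) → ℝ) (hνmono : Monotone ν)
    (eA : Lvl K G ≃ Fin (Fintype.card (Lvl K G)))
    (hν : ∀ c, hA.eigenvalues c = ν (eA c)) :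
    ∀ (i j : Fin (Fintype.card (Idx K G))) (a b : Fin (Fintype.card (Lvl K G))),
      (i : ℕ) = Fintype.card (Idx K G) - 3 → (j : ℕ) = K →
      (a : ℕ) = K - 1 → (b : ℕ) = Fintype.card (Lvl K G) - 2 →
      ν a ≤ 0 → 0 ≤ ν b →
      μ i * (1 + ((K : ℝ) - 1) * ν a) ≤ μ j * (1 + ((K : ℝ) - 1) * ν b) := by
  intro i j a b hi hj ha hb hνa hνb
  have hcard : Fintype.card (Idx K G) = Fintype.card (Lvl K G) + 1 := Fintype.card_option
  have hμi := Qbar_eigenvalue_le hK hobs hTv hτ hQ hμmono eQ hμ hA hνmono eA hν i b (by omega) hνb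
  have hμj := le_Qbar_eigenvalue hK hobs hTv hτ hQ hμmono eQ hμ hA hνmono eA hν j a (by omega) hνa
  have hK1 : (0 : ℝ) < K - 1 := sub_pos.2 (Nat.one_lt_cast.2 hK)
  have hνa_pos : 0 ≤ 1 + ((K : ℝ) - 1) * ν a := by
    have := mul_le_mul_of_nonneg_left (neg_inv_le_Abar_eigenvalue hK hobs hA hνmono eA hν a) hK1.le
    rwa [mul_neg, mul_inv_cancel₀ hK1.ne', neg_le_iff_add_nonneg'] at this
  calc μ i * (1 + ((K : ℝ) - 1) * ν a)
      ≤ (1 + ((K : ℝ) - 1) * ν b) * (1 + ((K : ℝ) - 1) * ν a) :=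
        mul_le_mul_of_nonneg_right hμi hνa_pos
    _ ≤ (1 + ((K : ℝ) - 1) * ν b) * μ j := mul_le_mul_of_nonneg_left hμj (by positivity)
    _ = μ j * (1 + ((K : ℝ) - 1) * ν b) := mul_comm _ _

/-- Lemma 1 of the paper: if `ν̄_K ≤ 0 ≤ ν̄_{p−2}` then
`μ̄_{p−2}·(1 + (K−1)ν̄_K) ≤ μ̄_{K+1}·(1 + (K−1)ν̄_{p−2})`, i.e. the effective condition
number satisfies `κ_{K+1,p−2}(Q̄) ≤ (1 + (K−1)ν̄_{p−2})/(1 + (K−1)ν̄_K)` whenever the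
denominator is positive.  (Eigenvalue lists are sorted nondecreasingly; `μ̄_{p−2}` is
`μ` at 0-based index `p−3`, `μ̄_{K+1}` at index `K`, `ν̄_K` at index `K−1`, and
`ν̄_{p−2}` at 0-based index `(p−1)−2` of the `p−1` eigenvalues of `Ā^(r)`.) -/
theorem effective_condition_number_bound (K N : ℕ) (G : Fin K → ℕ)
    (g : Fin N → ∀ k : Fin K, Fin (G k))
    (hK : 2 ≤ K) (hGk : ∀ k, 1 ≤ G k) (hN : 1 ≤ N)
    (hp : K + 1 ≤ ∑ k, G k)
    (hobs : ∀ (k : Fin K) (a : Fin (G k)), ∃ i, g i k = a)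
    (T0 : ℝ) (Tv : Fin K → ℝ) (τ : ℝ)
    (hT0 : 0 ≤ T0) (hTv : ∀ k, 0 ≤ Tv k) (hτ : 0 < τ)
    (hQ : (Qbar K N G g T0 Tv τ).IsHermitian)
    (μ : Fin (Fintype.card (Idx K G)) → ℝ) (hμmono : Monotone μ)
    (eQ : Idx K G ≃ Fin (Fintype.card (Idx K G)))
    (hμ : ∀ c, hQ.eigenvalues c = μ (eQ c))
    (hA : (Abar K N G g).IsHermitian)
    (ν : Fin (Fintype.card (Lvl K G)) → ℝ) (hνmono : Monotone ν)
    (eA : Lvl K G ≃ Fin (Fintype.card (Lvl K G)))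
    (hν : ∀ c, hA.eigenvalues c = ν (eA c)) :
    ∀ (i j : Fin (Fintype.card (Idx K G))) (a b : Fin (Fintype.card (Lvl K G))),
      (i : ℕ) = Fintype.card (Idx K G) - 3 → (j : ℕ) = K →
      (a : ℕ) = K - 1 → (b : ℕ) = Fintype.card (Lvl K G) - 2 →
      ν a ≤ 0 → 0 ≤ ν b →
      μ i * (1 + ((K : ℝ) - 1) * ν a) ≤ μ j * (1 + ((K : ℝ) - 1) * ν b) :=
  effective_condition_number_bound_general K N G g hK hobs T0 Tv τ hTv hτ hQ μ hμmono eQ hμ hA ν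
    hνmono eA hν

end Crossed
end

section
/- Under the random-intercept crossed effects design with K ≥ 2, let T be diagonal with nonnegative entries, τ > 0, Q = T + τU, and let Q̄^(r) = Diag(Q^(r))^{−1/2} Q^(r) Diag(Q^(r))^{−1/2} where Q^(r) is Q with the row and column of θ_0 removed. Then Q̄^(r) = I_{p−1} + C^{1/2} Ā^(r) C^{1/2}, where C is the diagonal matrix with entries C[(k,g)] = τ(K−1)·U^(r)[(k,g),(k,g)] / (T[(k,g),(k,g)] + τ·U^(r)[(k,g),(k,g)]), and every diagonal entry of C satisfies 0 < C[(k,g)] ≤ K−1. -/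
open Matrix

namespace Crossed

/-- `Q^(r)`: the matrix `Q` with the row and column of `θ₀` removed. -/
noncomputable def Qr (K N : ℕ) (G : Fin K → ℕ) (g : Fin N → ∀ k : Fin K, Fin (G k))
    (T0 : ℝ) (Tv : Fin K → ℝ) (τ : ℝ) : Matrix (Lvl K G) (Lvl K G) ℝ :=
  (Q K N G g T0 Tv τ).submatrix Option.some Option.some

/-- `Q̄^(r) = Diag(Q^(r))^{−1/2} Q^(r) Diag(Q^(r))^{−1/2}`. -/
noncomputable def Qbarr (K N : ℕ) (G : Fin K → ℕ) (g : Fin N → ∀ k : Fin K, Fin (G k))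
    (T0 : ℝ) (Tv : Fin K → ℝ) (τ : ℝ) : Matrix (Lvl K G) (Lvl K G) ℝ :=
  diagonal (fun c => (Real.sqrt (Qr K N G g T0 Tv τ c c))⁻¹) * Qr K N G g T0 Tv τ *
    diagonal (fun c => (Real.sqrt (Qr K N G g T0 Tv τ c c))⁻¹)

/-- The diagonal entries of `C`:
`C[(k,g)] = τ(K−1)·U^(r)[(k,g),(k,g)] / (T[(k,g),(k,g)] + τ·U^(r)[(k,g),(k,g)])`. -/
noncomputable def Cdiag (K N : ℕ) (G : Fin K → ℕ) (g : Fin N → ∀ k : Fin K, Fin (G k))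
    (Tv : Fin K → ℝ) (τ : ℝ) : Lvl K G → ℝ :=
  fun c => τ * ((K : ℝ) - 1) * Ur K N G g c c / (Tv c.1 + τ * Ur K N G g c c)

/-! Since `T` is diagonal, `Q^(r)` and `τ A^(r)` have the same off-diagonal part, so normalizing
`Q^(r)` by its diagonal gives `I + τ Δ A^(r) Δ` with `Δ = Diag(Q^(r))^{-1/2}`. Each entry
`√τ Δ_cc` factors as `C_cc^{1/2} D_cc^{-1/2}`, which turns `τ Δ A^(r) Δ` into
`C^{1/2} Ā^(r) C^{1/2}`.
The bound `C_cc ≤ K − 1` is `τ U_cc ≤ T_cc + τ U_cc`. -/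

theorem _root_.Matrix.diagonal_inv_sqrt_conj_eq_one_add {ι : Type*} [Fintype ι]
    [DecidableEq ι] (M : Matrix ι ι ℝ) (hM : ∀ i, 0 < M i i) :
    diagonal (fun i => (√(M i i))⁻¹) * M * diagonal (fun i => (√(M i i))⁻¹) =
      1 + diagonal (fun i => (√(M i i))⁻¹) * (M - diagonal fun i => M i i) *
        diagonal (fun i => (√(M i i))⁻¹) := by
  have hdiag : diagonal (fun i => (√(M i i))⁻¹) * diagonal (fun i => M i i) *
      diagonal (fun i => (√(M i i))⁻¹) = 1 := by
    rw [diagonal_mul_diagonal, diagonal_mul_diagonal, ← diagonal_one]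
    congr 1
    funext i
    calc (√(M i i))⁻¹ * M i i * (√(M i i))⁻¹ = M i i / (√(M i i) * √(M i i)) := by
          ring
      _ = 1 := by rw [Real.mul_self_sqrt (hM i).le, div_self (hM i).ne']
  rw [mul_sub, sub_mul, hdiag, add_sub_cancel]

theorem _root_.Real.sqrt_mul_div_mul_inv_sqrt {τ d : ℝ} (hτ : 0 ≤ τ) (hd : 0 < d) (q : ℝ) :
    √(τ * d / q) * (√d)⁻¹ = √τ * (√q)⁻¹ := by
  have : √d ≠ 0 := (Real.sqrt_pos.mpr hd).ne'
  rw [Real.sqrt_div (mul_nonneg hτ hd.le), Real.sqrt_mul hτ]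
  field_simp

variable {K N : ℕ} {G : Fin K → ℕ} {g : Fin N → ∀ k : Fin K, Fin (G k)}

theorem one_le_Ur_apply_self (hobs : ∀ (k : Fin K) (a : Fin (G k)), ∃ i, g i k = a)
    (c : Lvl K G) : 1 ≤ Ur K N G g c c := by
  obtain ⟨i, hi⟩ := hobs c.1 c.2
  have hsum : Ur K N G g c c = ∑ j, if g j c.1 = c.2 then (1 : ℝ) else 0 := by
    rw [Ur, mul_apply]
    exact Finset.sum_congr rfl fun j _ => by
      simp only [transpose_apply, Vr]
      split_ifs <;> norm_num
  rw [hsum]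
  refine le_trans (by simp [hi]) (Finset.single_le_sum (fun j _ => ?_) (Finset.mem_univ i))
  split_ifs <;> norm_num

theorem Ur_apply_self_pos (hobs : ∀ (k : Fin K) (a : Fin (G k)), ∃ i, g i k = a)
    (c : Lvl K G) : 0 < Ur K N G g c c :=
  one_pos.trans_le (one_le_Ur_apply_self hobs c)

theorem Qr_apply_self (T0 : ℝ) (Tv : Fin K → ℝ) (τ : ℝ) (c : Lvl K G) :
    Qr K N G g T0 Tv τ c c = Tv c.1 + τ * Ur K N G g c c := by
  simp [Qr, Q, U, Ur, V, Vr, mul_apply]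

theorem Qr_apply_self_pos (hobs : ∀ (k : Fin K) (a : Fin (G k)), ∃ i, g i k = a)
    (T0 : ℝ) {Tv : Fin K → ℝ} (hTv : ∀ k, 0 ≤ Tv k) {τ : ℝ} (hτ : 0 < τ)
    (c : Lvl K G) :
    0 < Qr K N G g T0 Tv τ c c := by
  rw [Qr_apply_self]
  exact add_pos_of_nonneg_of_pos (hTv c.1) (mul_pos hτ (Ur_apply_self_pos hobs c))

theorem Qr_sub_diagonal (T0 : ℝ) (Tv : Fin K → ℝ) (τ : ℝ) :
    Qr K N G g T0 Tv τ - diagonal (fun c => Qr K N G g T0 Tv τ c c) = τ • Ar K N G g := by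
  ext c c'
  by_cases h : c = c'
  · subst h
    simp [Ar]
  · simp [Qr, Q, U, Ur, V, Vr, Ar, mul_apply, h]

theorem Cdiag_eq (Tv : Fin K → ℝ) (τ : ℝ) (c : Lvl K G) :
    Cdiag K N G g Tv τ c =
      τ * (((K : ℝ) - 1) * Ur K N G g c c) / (Tv c.1 + τ * Ur K N G g c c) := by
  rw [Cdiag, mul_assoc]

theorem Cdiag_pos (hK : 1 < K) (hobs : ∀ (k : Fin K) (a : Fin (G k)), ∃ i, g i k = a)
    {Tv : Fin K → ℝ} (hTv : ∀ k, 0 ≤ Tv k) {τ : ℝ} (hτ : 0 < τ) (c : Lvl K G) :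
    0 < Cdiag K N G g Tv τ c := by
  have hK1 : (0 : ℝ) < K - 1 := sub_pos.mpr (by exact_mod_cast hK)
  have hU := Ur_apply_self_pos hobs c
  have hT := hTv c.1
  rw [Cdiag_eq]
  positivity

theorem Cdiag_le (hK : 1 ≤ K) (hobs : ∀ (k : Fin K) (a : Fin (G k)), ∃ i, g i k = a)
    {Tv : Fin K → ℝ} (hTv : ∀ k, 0 ≤ Tv k) {τ : ℝ} (hτ : 0 < τ) (c : Lvl K G) :
    Cdiag K N G g Tv τ c ≤ K - 1 := by
  have hK1 : (0 : ℝ) ≤ K - 1 := sub_nonneg.mpr (by exact_mod_cast hK)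
  have hτU : 0 < τ * Ur K N G g c c := mul_pos hτ (Ur_apply_self_pos hobs c)
  have hfrac : τ * Ur K N G g c c / (Tv c.1 + τ * Ur K N G g c c) ≤ 1 :=
    div_le_one_of_le₀ (le_add_of_nonneg_left (hTv c.1)) (by linarith [hTv c.1])
  calc Cdiag K N G g Tv τ c
      = (K - 1) * (τ * Ur K N G g c c / (Tv c.1 + τ * Ur K N G g c c)) := by
        rw [Cdiag]; ring
    _ ≤ (K - 1) * 1 := mul_le_mul_of_nonneg_left hfrac hK1
    _ = K - 1 := mul_one _

theorem sqrt_Cdiag_mul_inv_sqrt (hK : 1 < K)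
    (hobs : ∀ (k : Fin K) (a : Fin (G k)), ∃ i, g i k = a)
    (T0 : ℝ) (Tv : Fin K → ℝ) {τ : ℝ} (hτ : 0 ≤ τ) (c : Lvl K G) :
    √(Cdiag K N G g Tv τ c) * (√(((K : ℝ) - 1) * Ur K N G g c c))⁻¹ =
      √τ * (√(Qr K N G g T0 Tv τ c c))⁻¹ := by
  have hK1 : (0 : ℝ) < K - 1 := sub_pos.mpr (by exact_mod_cast hK)
  rw [Cdiag_eq, Qr_apply_self]
  exact Real.sqrt_mul_div_mul_inv_sqrt hτ (mul_pos hK1 (Ur_apply_self_pos hobs c)) _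

theorem Qbar_restricted_decomposition_general (K N : ℕ) (G : Fin K → ℕ)
    (g : Fin N → ∀ k : Fin K, Fin (G k))
    (hK : 2 ≤ K)
    (hobs : ∀ (k : Fin K) (a : Fin (G k)), ∃ i, g i k = a)
    (T0 : ℝ) (Tv : Fin K → ℝ) (τ : ℝ)
    (hTv : ∀ k, 0 ≤ Tv k) (hτ : 0 < τ) :
    Qbarr K N G g T0 Tv τ
      = 1 + diagonal (fun c => Real.sqrt (Cdiag K N G g Tv τ c)) * Abar K N G g *
          diagonal (fun c => Real.sqrt (Cdiag K N G g Tv τ c)) ∧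
    ∀ c : Lvl K G, 0 < Cdiag K N G g Tv τ c ∧ Cdiag K N G g Tv τ c ≤ (K : ℝ) - 1 := by
  refine ⟨?_, fun c => ⟨Cdiag_pos hK hobs hTv hτ c, Cdiag_le (by omega) hobs hTv hτ c⟩⟩
  rw [Qbarr, diagonal_inv_sqrt_conj_eq_one_add _ (Qr_apply_self_pos hobs T0 hTv hτ),
    Qr_sub_diagonal]
  congr 1
  ext c c'
  simp only [Abar, mul_diagonal, diagonal_mul, Matrix.smul_apply, smul_eq_mul]
  calc _ = (√τ * (√(Qr K N G g T0 Tv τ c c))⁻¹) * Ar K N G g c c' *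
        (√τ * (√(Qr K N G g T0 Tv τ c' c'))⁻¹) := by
        linear_combination -((√(Qr K N G g T0 Tv τ c c))⁻¹ * Ar K N G g c c' *
          (√(Qr K N G g T0 Tv τ c' c'))⁻¹) * Real.mul_self_sqrt hτ.le
    _ = _ := by rw [← sqrt_Cdiag_mul_inv_sqrt hK hobs T0 Tv hτ.le,
                  ← sqrt_Cdiag_mul_inv_sqrt hK hobs T0 Tv hτ.le]; ring

/-- `Q̄^(r) = I + C^{1/2} Ā^(r) C^{1/2}` with `C` diagonal with entries
`τ(K−1)U_cc/(T_cc + τU_cc)`, and every diagonal entry of `C` lies in `(0, K−1]`. -/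
theorem Qbar_restricted_decomposition (K N : ℕ) (G : Fin K → ℕ)
    (g : Fin N → ∀ k : Fin K, Fin (G k))
    (hK : 2 ≤ K) (hGk : ∀ k, 1 ≤ G k) (hN : 1 ≤ N)
    (hobs : ∀ (k : Fin K) (a : Fin (G k)), ∃ i, g i k = a)
    (T0 : ℝ) (Tv : Fin K → ℝ) (τ : ℝ)
    (hT0 : 0 ≤ T0) (hTv : ∀ k, 0 ≤ Tv k) (hτ : 0 < τ) :
    Qbarr K N G g T0 Tv τ
      = 1 + diagonal (fun c => Real.sqrt (Cdiag K N G g Tv τ c)) * Abar K N G g *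
          diagonal (fun c => Real.sqrt (Cdiag K N G g Tv τ c)) ∧
    ∀ c : Lvl K G, 0 < Cdiag K N G g Tv τ c ∧ Cdiag K N G g Tv τ c ≤ (K : ℝ) - 1 :=
  Qbar_restricted_decomposition_general K N G g hK hobs T0 Tv τ hTv hτ

end Crossed
end
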